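/- arXiv:math/0211386 — 7 statements merged into one kernel-verified Lean document; each statement's English description precedes it below -/
import Mathlib

section
/- With φ as above written as φ = X(1 + Σ_{k≥1} A_k X^k), the coefficient A_k satisfies A_k = −(1/2) a_k + A_k*, where A_k* belongs to the polynomial ideal generated by a_1, ..., a_{k−1}. -/
/-!
Fix `a` with `a₁ = ⋯ = a_{k-1} = 0` and put `F x = x √(1 + Σ aᵢ xⁱ)`, so that
`F x = x + (a_k / 2) x^{k+1} + o(x^{k+1})`. For a polynomial `P` with `φ y = P y + o(y^{k+1})`
one has `P (F x) - P x = P'(0) (F x - x) + o(x^{k+1})`, so `φ ∘ F = id` turns into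
`x = P x + P'(0) (a_k / 2) x^{k+1} + o(x^{k+1})`. Comparing coefficients gives `P'(0) = 1` and
`A_k(a) = -a_k / 2`. Finally, a polynomial vanishing on the coordinate subspace
`a₁ = ⋯ = a_{k-1} = 0` lies in the ideal generated by `a₁, …, a_{k-1}`.
-/

open Filter Asymptotics Topology

section NormedField

variable {𝕜 : Type*} [NontriviallyNormedField 𝕜]

lemma Asymptotics.isBigO_pow_pow_of_le {m n : ℕ} (h : m ≤ n) :
    (fun x : 𝕜 => x ^ n) =O[𝓝 0] fun x => x ^ m :=
  h.eq_or_lt.elim (fun h => h ▸ isBigO_refl _ _) fun h => (isLittleO_pow_pow h).isBigO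

lemma Asymptotics.IsBigO.pow_succ_sub_pow_succ {α : Type*} {l : Filter α} {f g u : α → 𝕜}
    (hf : f =O[l] u) (hg : g =O[l] u) (n : ℕ) :
    (fun x => f x ^ (n + 1) - g x ^ (n + 1)) =O[l] fun x => u x ^ n * (f x - g x) := by
  simp_rw [← geom_sum₂_mul]
  refine IsBigO.mul (IsBigO.fun_sum fun i _ => ?_) (isBigO_refl _ _)
  have hi : i + (n + 1 - 1 - i) = n := by grind
  simpa only [← pow_add, hi] using (hf.pow i).mul (hg.pow (n + 1 - 1 - i))

lemma Asymptotics.IsBigO.isBigO_id_of_sub_id {F : 𝕜 → 𝕜} {n : ℕ}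
    (hF : (fun x => F x - x) =O[𝓝 0] (· ^ (n + 1))) : F =O[𝓝 0] fun x => x := by
  have hx : (fun x : 𝕜 => x ^ (n + 1)) =O[𝓝 0] fun x => x := by
    simpa using isBigO_pow_pow_of_le (𝕜 := 𝕜) n.succ_pos
  simpa using (hF.trans hx).add (isBigO_refl (fun x => x) _)

lemma isBigO_sum_mul_pow_sub {ι : Type*} [Fintype ι] (a : ι → 𝕜) (e : ι → ℕ) {i₀ : ι}
    (h : ∀ i ≠ i₀, a i = 0 ∨ e i₀ < e i) :
    (fun x => ∑ i, a i * x ^ e i - a i₀ * x ^ e i₀) =O[𝓝 0] (· ^ (e i₀ + 1)) := by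
  classical
  simp_rw [← Finset.sum_erase_eq_sub (Finset.mem_univ i₀)]
  refine IsBigO.fun_sum fun i hi => ?_
  rcases h i (Finset.ne_of_mem_erase hi) with hai | hlt
  · simpa [hai] using isBigO_zero _ _
  · exact (isBigO_pow_pow_of_le hlt).const_mul_left (a i)

namespace Polynomial

lemma coeff_eq_zero_of_isLittleO_eval {p : 𝕜[X]} {n : ℕ}
    (h : (fun x => p.eval x) =o[𝓝 0] (· ^ n)) {i : ℕ} (hi : i ≤ n) : p.coeff i = 0 := by
  by_contra hpi
  have hd : p.natTrailingDegree ≤ n := (natTrailingDegree_le_of_ne_zero hpi).trans hi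
  have hpd : p.coeff p.natTrailingDegree ≠ 0 :=
    mt trailingCoeff_eq_zero.1 (by rintro rfl; simp at hpi)
  obtain ⟨q, hpq⟩ : X ^ p.natTrailingDegree ∣ p :=
    X_pow_dvd_iff.2 fun j hj => coeff_eq_zero_of_lt_natTrailingDegree hj
  generalize p.natTrailingDegree = d at hd hpd hpq
  subst hpq
  have hq0 : q.eval 0 ≠ 0 := by
    rwa [coeff_X_pow_mul', if_pos le_rfl, Nat.sub_self, coeff_zero_eq_eval_zero] at hpd
  have hqd : (fun x => x ^ d * q.eval x) =o[𝓝 0] (· ^ d) := by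
    simpa using h.trans_isBigO (isBigO_pow_pow_of_le hd)
  have hq_zero : Tendsto (fun x => q.eval x) (𝓝[≠] 0) (𝓝 0) := by
    refine (hqd.mono nhdsWithin_le_nhds).tendsto_div_nhds_zero.congr' ?_
    filter_upwards [self_mem_nhdsWithin] with x (hx : x ≠ 0)
    field_simp
  exact hq0 <| tendsto_nhds_unique
    (q.continuous.continuousAt.tendsto.mono_left nhdsWithin_le_nhds) hq_zero

lemma isLittleO_eval_comp_sub {F : 𝕜 → 𝕜} {n : ℕ}
    (hF : (fun x => F x - x) =O[𝓝 0] (· ^ (n + 1))) (p : 𝕜[X]) :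
    (fun x => p.eval (F x) - p.eval x - p.coeff 1 * (F x - x)) =o[𝓝 0] (· ^ (n + 1)) := by
  have hterm (i : ℕ) : (fun x => F x ^ (i + 2) - x ^ (i + 2)) =o[𝓝 0] (· ^ (n + 1)) := by
    refine ((hF.isBigO_id_of_sub_id.pow_succ_sub_pow_succ (isBigO_refl _ _) (i + 1)).trans
      ((isBigO_refl (· ^ (i + 1)) _).mul hF)).trans_isLittleO ?_
    simpa only [← pow_add] using isLittleO_pow_pow (by omega : n + 1 < i + 1 + (n + 1))
  have hsum (x : 𝕜) : p.eval (F x) - p.eval x - p.coeff 1 * (F x - x) =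
      ∑ i ∈ Finset.range p.natDegree, p.coeff (i + 2) * (F x ^ (i + 2) - x ^ (i + 2)) := by
    have hdeg : p.natDegree < p.natDegree + 2 := by omega
    rw [eval_eq_sum_range' hdeg, eval_eq_sum_range' hdeg]
    simp only [Finset.sum_range_succ', mul_sub, Finset.sum_sub_distrib]
    ring
  simp_rw [hsum]
  exact IsLittleO.fun_sum fun i _ => (hterm i).const_mul_left _

theorem coeff_succ_eq_neg_of_leftInverse {F φ : 𝕜 → 𝕜} {p : 𝕜[X]} {β : 𝕜} {n : ℕ}
    (hn : 1 ≤ n) (hφF : ∀ᶠ x in 𝓝 0, φ (F x) = x)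
    (hF : (fun x => F x - x - β * x ^ (n + 1)) =o[𝓝 0] (· ^ (n + 1)))
    (hφ : (fun y => φ y - p.eval y) =o[𝓝 0] (· ^ (n + 1))) :
    p.coeff (n + 1) = -β := by
  have hFx : (fun x => F x - x) =O[𝓝 0] (· ^ (n + 1)) := by
    simpa using hF.isBigO.add ((isBigO_refl (· ^ (n + 1)) _).const_mul_left β)
  have hFO := hFx.isBigO_id_of_sub_id
  have hφ_comp : (fun x => φ (F x) - p.eval (F x)) =o[𝓝 0] (· ^ (n + 1)) :=
    (hφ.comp_tendsto (hFO.trans_tendsto tendsto_id)).trans_isBigO (hFO.pow (n + 1))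
  have key :
      (fun x => (X - p - C (p.coeff 1 * β) * X ^ (n + 1)).eval x) =o[𝓝 0] (· ^ (n + 1)) := by
    refine ((hφ_comp.add (isLittleO_eval_comp_sub hFx p)).add (hF.const_mul_left (p.coeff 1))).congr'
      ?_ EventuallyEq.rfl
    filter_upwards [hφF] with x hx
    simp only [hx, eval_sub, eval_X, eval_mul, eval_C, eval_pow]
    ring
  have h1 := coeff_eq_zero_of_isLittleO_eval key (by omega : 1 ≤ n + 1)
  have h2 := coeff_eq_zero_of_isLittleO_eval key le_rfl
  simp only [coeff_sub, coeff_X, coeff_C_mul_X_pow, if_true, if_neg (by omega : 1 ≠ n + 1)]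
    at h1 h2
  linear_combination -h2 + β * h1

end Polynomial

end NormedField

lemma Real.isBigO_sqrt_one_add_sub : (fun u : ℝ => √(1 + u) - 1 - u / 2) =O[𝓝 0] (· ^ 2) := by
  refine IsBigO.of_bound 1 ?_
  filter_upwards [Ioi_mem_nhds (by norm_num : (-1 : ℝ) < 0)] with u (hu : -1 < u)
  have hs : √(1 + u) ^ 2 = 1 + u := Real.sq_sqrt (by linarith)
  have hs0 := Real.sqrt_nonneg (1 + u)
  rw [show √(1 + u) - 1 - u / 2 = -(√(1 + u) - 1) ^ 2 / 2 by linear_combination hs / 2]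
  simp only [norm_div, norm_neg, norm_pow, Real.norm_eq_abs, sq_abs, one_mul, abs_two]
  -- `|√(1 + u) - 1| ≤ |u|` since `u = (√(1 + u) - 1) (√(1 + u) + 1)`
  nlinarith [sq_nonneg (√(1 + u) - 1), mul_nonneg hs0 (sq_nonneg (√(1 + u) - 1))]

lemma isLittleO_mul_sqrt_one_add_sub {S : ℝ → ℝ} {α : ℝ} {k : ℕ} (hk : 1 ≤ k)
    (hS : (fun x => S x - α * x ^ k) =O[𝓝 0] (· ^ (k + 1))) :
    (fun x => x * √(1 + S x) - x - α / 2 * x ^ (k + 1)) =o[𝓝 0] (· ^ (k + 1)) := by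
  have hSk : S =O[𝓝 0] (· ^ k) := by
    simpa using (hS.trans (isBigO_pow_pow_of_le k.le_succ)).add
      ((isBigO_refl (· ^ k) _).const_mul_left α)
  have hS0 : Tendsto S (𝓝 0) (𝓝 0) :=
    hSk.trans_tendsto ((continuous_pow k).tendsto' 0 0 (zero_pow (by omega)))
  have hsqrt : (fun x => √(1 + S x) - 1 - S x / 2) =O[𝓝 0] (· ^ (k * 2)) := by
    simpa only [pow_mul, Function.comp_def] using
      (Real.isBigO_sqrt_one_add_sub.comp_tendsto hS0).trans (hSk.pow 2)
  have h1 : (fun x => x * (√(1 + S x) - 1 - S x / 2)) =o[𝓝 0] (· ^ (k + 1)) := by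
    refine ((isBigO_refl (fun x : ℝ => x) _).mul hsqrt).trans_isLittleO ?_
    simpa only [pow_succ'] using isLittleO_pow_pow (𝕜 := ℝ) (by omega : k + 1 < k * 2 + 1)
  have h2 : (fun x => 1 / 2 * x * (S x - α * x ^ k)) =o[𝓝 0] (· ^ (k + 1)) := by
    refine ((isBigO_refl (fun x : ℝ => x) _).const_mul_left (1 / 2) |>.mul hS).trans_isLittleO ?_
    simpa only [pow_succ'] using isLittleO_pow_pow (𝕜 := ℝ) (by omega : k + 1 < k + 1 + 1)
  refine (h1.add h2).congr_left fun x => ?_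
  ring

lemma MvPolynomial.mem_ideal_span_X_image_of_eval_eq_zero {R σ : Type*} [CommRing R] [IsDomain R]
    [Infinite R] {s : Set σ} {p : MvPolynomial σ R}
    (h : ∀ a : σ → R, (∀ i ∈ s, a i = 0) → eval a p = 0) :
    p ∈ Ideal.span (X '' s) := by
  classical
  set I := Ideal.span ((X : σ → MvPolynomial σ R) '' s)
  -- `g` kills the variables indexed by `s`, hence is the identity modulo `I`
  set g := bind₁ (R := R) (fun i => if i ∈ s then 0 else (X i : MvPolynomial σ R)) with hg_def
  have hg : (Ideal.Quotient.mkₐ R I).comp g = Ideal.Quotient.mkₐ R I := by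
    refine algHom_ext fun i => ?_
    by_cases hi : i ∈ s
    · simp only [AlgHom.comp_apply, g, bind₁_X_right, hi, if_true, map_zero,
        Ideal.Quotient.mkₐ_eq_mk]
      exact ((Ideal.Quotient.eq_zero_iff_mem (I := I)).2 (Ideal.subset_span ⟨i, hi, rfl⟩)).symm
    · simp [g, hi]
  have hgp : g p = 0 := funext fun a => by
    change aeval a (g p) = aeval a 0
    rw [hg_def, aeval_bind₁, map_zero]
    convert h (fun i => if i ∈ s then 0 else a i) fun i hi => if_pos hi
    simp only [apply_ite (aeval a), map_zero, aeval_X, aeval_eq_eval]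
  rw [← Ideal.Quotient.eq_zero_iff_mem, ← Ideal.Quotient.mkₐ_eq_mk R, ← hg, AlgHom.comp_apply, hgp,
    map_zero]

/-- With `φ = X(1 + Σ_{k≥1} A_k X^k)` the local inverse of
`x ↦ x(1 + a₁x + ⋯ + a_m x^m)^{1/2}` (here `m = n − 2`, and `a_j` corresponds to the
variable `X ⟨j-1⟩`), each coefficient satisfies `A_k = −(1/2) a_k + A_k*` where `A_k*`
lies in the polynomial ideal generated by `a₁, …, a_{k−1}`. -/
theorem stmt4 (m : ℕ) (A : ℕ → MvPolynomial (Fin m) ℝ)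
    (hA : ∀ a : Fin m → ℝ, ∃ ε > (0 : ℝ), ∃ φ : ℝ → ℝ,
      (∀ x : ℝ, |x| < ε →
        φ (x * Real.sqrt (1 + ∑ i : Fin m, a i * x ^ ((i : ℕ) + 1))) = x) ∧
      ∀ K : ℕ,
        (fun X : ℝ => φ X -
            X * (1 + ∑ k ∈ Finset.Icc 1 K, (MvPolynomial.eval a (A k)) * X ^ k))
          =o[nhds 0] fun X : ℝ => X ^ (K + 1)) :
    ∀ (k : ℕ) (h1 : 1 ≤ k) (h2 : k ≤ m),
      A k + MvPolynomial.C (1 / 2 : ℝ) * MvPolynomial.X (⟨k - 1, by omega⟩ : Fin m) ∈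
        Ideal.span ((fun i : Fin m => (MvPolynomial.X i : MvPolynomial (Fin m) ℝ)) ''
          {i : Fin m | (i : ℕ) + 1 < k}) := by
  intro k h1 h2
  refine MvPolynomial.mem_ideal_span_X_image_of_eval_eq_zero fun a ha => ?_
  obtain ⟨ε, hε, φ, hφ, hexp⟩ := hA a
  set i₀ : Fin m := ⟨k - 1, by omega⟩
  have hS := isBigO_sum_mul_pow_sub a (fun i : Fin m => (i : ℕ) + 1) (i₀ := i₀) fun i hi => by
    by_cases hik : (i : ℕ) + 1 < k
    · exact .inl (ha i hik)
    · exact .inr (by simp only [i₀, ne_eq, Fin.ext_iff] at hi ⊢; omega)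
  rw [show (i₀ : ℕ) + 1 = k by simp only [i₀]; omega] at hS
  have hφF : ∀ᶠ x in 𝓝 0, φ (x * √(1 + ∑ i : Fin m, a i * x ^ ((i : ℕ) + 1))) = x := by
    filter_upwards [Metric.ball_mem_nhds 0 hε] with x hx
    exact hφ x (by simpa using hx)
  let P : Polynomial ℝ :=
    .X * (1 + ∑ j ∈ Finset.Icc 1 k, .C (MvPolynomial.eval a (A j)) * .X ^ j)
  have hφP : (fun y => φ y - P.eval y) =o[𝓝 0] (· ^ (k + 1)) := by
    simpa [P, Polynomial.eval_finsetSum] using hexp k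
  have hP : P.coeff (k + 1) = MvPolynomial.eval a (A k) := by
    simp [P, Polynomial.coeff_X_mul, Polynomial.coeff_one, show k ≠ 0 by omega, h1]
  have hcoeff := Polynomial.coeff_succ_eq_neg_of_leftInverse h1 hφF
    (isLittleO_mul_sqrt_one_add_sub h1 hS) hφP
  simp only [map_add, map_mul, MvPolynomial.eval_C, MvPolynomial.eval_X]
  linear_combination hcoeff - hP
end

section
/- Any real Hamiltonian H = y^2 + P(x) with deg P = 5 whose level sets contain an oval can be brought, by a real affine change of x, rescaling of y, and adding a constant, to the normal form H = (1/2)y^2 − (λμ/2)x^2 + ((λ+μ+λμ)/3)x^3 − ((1+λ+μ)/4)x^4 + (1/5)x^5, where either 0 ≤ μ ≤ λ ≤ 1 (real case) or λ and μ are complex conjugates. -/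
open Real Complex Polynomial

/-!
By the mean value theorem an oval of `y² + P(x) = h` forces `P'` to take both signs. The real
quartic `P'` then has two distinct real roots `r₀ ≠ r₁`, and its two other roots are either real
and lie between them (choose `r₀, r₁` to be the extreme real roots) or form a non-real conjugate
pair: a real cofactor without real roots has constant sign and even degree. The substitution
`x = r₀ + (r₁ - r₀) X` moves the roots of `P'` to `0, 1, λ, μ`, so the transformed `P` is a
primitive of a multiple of `X (X - 1) (X - λ) (X - μ)`, i.e. the quintic normal form up to a
factor and a constant. After the reflection `X ↦ 1 - X` if necessary the factor is positive, and
it is absorbed into a real rescaling of `y`.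
-/

namespace Polynomial

theorem eval_mul_eval_pos_of_forall_not_isRoot {g : ℝ[X]} (hg : ∀ x, ¬g.IsRoot x) (x y : ℝ) :
    0 < g.eval x * g.eval y := by
  by_contra! hxy
  have h0 : (0 : ℝ) ∈ Set.uIcc (g.eval x) (g.eval y) := by
    rcases (show g.eval x ≠ 0 from hg x).lt_or_gt with hx | hx
    · exact Set.mem_uIcc_of_le hx.le (nonneg_of_mul_nonpos_right hxy hx)
    · exact Set.mem_uIcc_of_ge (nonpos_of_mul_nonpos_right hxy hx) hx.le
  obtain ⟨z, -, hz⟩ := intermediate_value_uIcc g.continuous.continuousOn h0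
  exact hg z hz

theorem eval_mul_eval_nonneg_of_eq_sq_mul {D f g : ℝ[X]} (hD : D = f ^ 2 * g)
    (hg : ∀ x, ¬g.IsRoot x) (x y : ℝ) : 0 ≤ D.eval x * D.eval y := by
  have key : D.eval x * D.eval y = (f.eval x * f.eval y) ^ 2 * (g.eval x * g.eval y) := by
    simp only [hD, eval_mul, eval_pow]; ring
  rw [key]
  exact mul_nonneg (sq_nonneg _) (eval_mul_eval_pos_of_forall_not_isRoot hg x y).le

-- `g(x) g(-x)` has degree `2 deg g` and leading coefficient `-lc(g)²`, so it is negative for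
-- large `x`.
theorem exists_isRoot_of_odd_natDegree {g : ℝ[X]} (hg : Odd g.natDegree) : ∃ x, g.IsRoot x := by
  by_contra! hroot
  have hg0 : g ≠ 0 := by rintro rfl; simp at hg
  set h := g * g.comp (-X)
  have hlc : h.leadingCoeff = -g.leadingCoeff ^ 2 := by
    rw [leadingCoeff_mul, leadingCoeff_comp (by simp)]
    simp [hg.neg_one_pow]; ring
  have hdeg : 0 < h.degree := by
    have hgn0 : g.comp (-X) ≠ 0 := fun h0 => hg0 (comp_neg_X_eq_zero_iff.mp h0)
    rw [← natDegree_pos_iff_degree_pos, natDegree_mul hg0 hgn0, natDegree_comp]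
    simpa using hg.pos
  obtain ⟨x, hx⟩ := ((tendsto_atBot_of_leadingCoeff_nonpos h hdeg
    (by rw [hlc]; nlinarith)).eventually_lt_atBot 0).exists
  have := eval_mul_eval_pos_of_forall_not_isRoot hroot x (-x)
  simp [h] at hx
  linarith

theorem exists_map_eq_mul_conj_of_natDegree_eq_two {g : ℝ[X]} (hg2 : g.natDegree = 2)
    (hg : ∀ x, ¬g.IsRoot x) :
    ∃ z : ℂ, z.im ≠ 0 ∧ g.map (algebraMap ℝ ℂ) =
      C (g.leadingCoeff : ℂ) * ((X - C z) * (X - C ((starRingEnd ℂ) z))) := by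
  obtain ⟨z, hz⟩ := IsAlgClosed.exists_aeval_eq_zero ℂ g (by
    rw [degree_eq_natDegree (by rintro rfl; simp at hg2), hg2]; decide)
  have him : z.im ≠ 0 := by
    intro h0
    rw [← Complex.re_add_im z, h0, Complex.ofReal_zero, zero_mul, add_zero,
      ← Complex.coe_algebraMap, aeval_algebraMap_apply_eq_algebraMap_eval] at hz
    exact hg z.re (by simpa using hz)
  have hmonic : ((X - C ((starRingEnd ℂ) z)) * (X - C z)).Monic :=
    (monic_X_sub_C _).mul (monic_X_sub_C _)
  refine ⟨z, him, ?_⟩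
  rw [eq_leadingCoeff_mul_of_monic_of_dvd_of_natDegree_le hmonic
    (mul_star_dvd_of_aeval_eq_zero_im_ne_zero g hz him) (by
      rw [natDegree_map, hg2, (monic_X_sub_C _).natDegree_mul (monic_X_sub_C _)]; simp)]
  rw [leadingCoeff_map, mul_comm (X - C _)]
  rfl

theorem eval_map_ofReal (p : ℝ[X]) (x : ℝ) :
    (p.map (algebraMap ℝ ℂ)).eval (x : ℂ) = p.eval x := by
  rw [eval_map_algebraMap]
  exact (ofReal_eval p x).symm

section AffineSubstitution

variable {K : Type*} [Field K]

theorem comp_affine_eq_of_eq_C_mul {p : K[X]} {a r₀ r₁ z₂ z₃ : K} (h01 : r₀ ≠ r₁)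
    (hp : p = C a * ((X - C r₀) * (X - C r₁) * (X - C z₂) * (X - C z₃))) :
    p.comp (C (r₁ - r₀) * X + C r₀) = C (a * (r₁ - r₀) ^ 4) *
      (X * (X - 1) * (X - C ((z₂ - r₀) / (r₁ - r₀))) * (X - C ((z₃ - r₀) / (r₁ - r₀)))) := by
  have hσ : r₁ - r₀ ≠ 0 := sub_ne_zero.mpr h01.symm
  have factor : ∀ z, C (r₁ - r₀) * X + C r₀ - C z =
      C (r₁ - r₀) * (X - C ((z - r₀) / (r₁ - r₀))) := by
    intro z
    rw [mul_sub, ← C_mul, mul_div_cancel₀ _ hσ]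
    simp only [C_sub]
    ring
  simp only [hp, mul_comp, C_comp, sub_comp, X_comp, factor, sub_self, zero_div, C_0, sub_zero,
    div_self hσ, C_1, C_mul, C_pow]
  ring

theorem comp_affine_reflect {p : K[X]} {a σ r lam mu : K}
    (h : p.comp (C σ * X + C r) = C (a * σ ^ 4) * (X * (X - 1) * (X - C lam) * (X - C mu))) :
    p.comp (C (-σ) * X + C (σ + r)) =
      C (a * (-σ) ^ 4) * (X * (X - 1) * (X - C (1 - mu)) * (X - C (1 - lam))) := by
  have hflip : C (-σ) * X + C (σ + r) = (C σ * X + C r).comp (1 - X) := by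
    simp only [add_comp, mul_comp, C_comp, X_comp, C_neg, C_add]; ring
  rw [hflip, ← comp_assoc, h]
  simp only [mul_comp, sub_comp, C_comp, X_comp, one_comp]
  simp only [C_sub, C_1, C_mul, C_pow, C_neg]
  ring

theorem comp_affine_eq_of_derivative_comp_eq [CharZero K] {p G : K[X]} {a σ r : K}
    (h : (derivative p).comp (C σ * X + C r) = C a * derivative G) :
    p.comp (C σ * X + C r) = C (σ * a) * G + C (p.eval r - σ * a * G.eval 0) := by
  set F := p.comp (C σ * X + C r) - C (σ * a) * G
  have hF : derivative F = 0 := by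
    simp only [F, derivative_sub, derivative_comp, h, derivative_mul, derivative_add,
      derivative_X, derivative_C, zero_mul, zero_add, add_zero, mul_one, C_mul]
    ring
  have hF0 : F.coeff 0 = p.eval r - σ * a * G.eval 0 := by
    simp [F, coeff_zero_eq_eval_zero, eval_comp]
  rw [← hF0, ← eq_C_of_derivative_eq_zero hF]
  ring

end AffineSubstitution

end Polynomial

def NormalFormParams (lam mu : ℂ) : Prop :=
  (lam.im = 0 ∧ mu.im = 0 ∧ 0 ≤ mu.re ∧ mu.re ≤ lam.re ∧ lam.re ≤ 1) ∨
    (mu = (starRingEnd ℂ) lam ∧ lam.im ≠ 0)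

namespace NormalFormParams

theorem of_real {t u : ℝ} (hu : 0 ≤ u) (hut : u ≤ t) (ht : t ≤ 1) :
    NormalFormParams t u :=
  Or.inl ⟨ofReal_im t, ofReal_im u, by simpa, by simpa, by simpa⟩

theorem of_im_ne_zero {z : ℂ} (hz : z.im ≠ 0) : NormalFormParams z ((starRingEnd ℂ) z) :=
  Or.inr ⟨rfl, hz⟩

theorem reflect {lam mu : ℂ} (h : NormalFormParams lam mu) :
    NormalFormParams (1 - mu) (1 - lam) := by
  rcases h with ⟨hl, hm, h0, hml, h1⟩ | ⟨rfl, hl⟩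
  · left
    simp only [sub_im, one_im, sub_re, one_re, hl, hm]
    refine ⟨?_, ?_, ?_, ?_, ?_⟩ <;> linarith
  · right
    simp [hl]

end NormalFormParams

def HasNormalizableRoots (D : ℝ[X]) : Prop :=
  ∃ (c r₀ r₁ : ℝ) (z₂ z₃ : ℂ), c ≠ 0 ∧ r₀ ≠ r₁ ∧
    NormalFormParams ((z₂ - r₀) / (r₁ - r₀)) ((z₃ - r₀) / (r₁ - r₀)) ∧
    D.map (algebraMap ℝ ℂ) =
      C (c : ℂ) * ((X - C (r₀ : ℂ)) * (X - C (r₁ : ℂ)) * (X - C z₂) * (X - C z₃))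

theorem hasNormalizableRoots_of_two_real_roots {D g : ℝ[X]} {r s x y : ℝ}
    (hD : D = (X - C r) * (X - C s) * g) (hg2 : g.natDegree = 2) (hg : ∀ x, ¬g.IsRoot x)
    (hxy : D.eval x * D.eval y < 0) : HasNormalizableRoots D := by
  have hrs : r ≠ s := by
    rintro rfl
    exact hxy.not_ge
      (eval_mul_eval_nonneg_of_eq_sq_mul (f := X - C r) (by rw [hD]; ring) hg x y)
  obtain ⟨z, hz, hmap⟩ := exists_map_eq_mul_conj_of_natDegree_eq_two hg2 hg
  have hsr : ((s : ℂ) - r) = ((s - r : ℝ) : ℂ) := by push_cast; ring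
  refine ⟨g.leadingCoeff, r, s, z, (starRingEnd ℂ) z, ?_, hrs, ?_, ?_⟩
  · exact leadingCoeff_ne_zero.mpr (by rintro rfl; simp at hg2)
  · convert NormalFormParams.of_im_ne_zero (z := (z - r) / (s - r)) ?_ using 1
    · simp [map_div₀]
    · rw [hsr, div_ofReal_im]
      exact div_ne_zero (by simpa using hz) (sub_ne_zero.mpr hrs.symm)
  · rw [hD, Polynomial.map_mul, hmap]
    simp only [Polynomial.map_mul, Polynomial.map_sub, map_X, map_C, Complex.coe_algebraMap]
    ring

theorem hasNormalizableRoots_of_four_real_roots {D : ℝ[X]} {c s₀ s₁ s₂ s₃ x y : ℝ}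
    (hD : D = C c * ((X - C s₀) * (X - C s₁) * (X - C s₂) * (X - C s₃)))
    (h01 : s₀ ≤ s₁) (h12 : s₁ ≤ s₂) (h23 : s₂ ≤ s₃) (hxy : D.eval x * D.eval y < 0) :
    HasNormalizableRoots D := by
  have hc : c ≠ 0 := by
    rintro rfl
    simp [hD] at hxy
  have h03 : s₀ < s₃ := by
    by_contra! h30
    obtain ⟨e₁, e₂, e₃⟩ : s₁ = s₀ ∧ s₂ = s₀ ∧ s₃ = s₀ := by
      refine ⟨?_, ?_, ?_⟩ <;> linarith
    refine hxy.not_ge (eval_mul_eval_nonneg_of_eq_sq_mul (f := (X - C s₀) ^ 2) (g := C c)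
      (by rw [hD, e₁, e₂, e₃]; ring) (by simpa using hc) x y)
  have hσ : 0 < s₃ - s₀ := sub_pos.mpr h03
  refine ⟨c, s₀, s₃, s₂, s₁, hc, h03.ne, ?_, ?_⟩
  · have hcast : ∀ t : ℝ,
        ((t : ℂ) - s₀) / ((s₃ : ℂ) - s₀) = (((t - s₀) / (s₃ - s₀) : ℝ) : ℂ) := by
      intro t; push_cast; rfl
    rw [hcast, hcast]
    exact NormalFormParams.of_real (div_nonneg (by linarith) hσ.le)
      (div_le_div_of_nonneg_right (by linarith) hσ.le) ((div_le_one hσ).mpr (by linarith))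
  · rw [hD]
    simp only [Polynomial.map_mul, Polynomial.map_sub, map_X, map_C, Complex.coe_algebraMap]
    ring

theorem hasNormalizableRoots_of_eval_mul_eval_neg {D : ℝ[X]} (hD : D.natDegree = 4) {x y : ℝ}
    (hxy : D.eval x * D.eval y < 0) : HasNormalizableRoots D := by
  obtain ⟨g, hDg, hcard, hgroots⟩ := exists_prod_multiset_X_sub_C_mul D
  generalize D.roots = R at hDg hcard
  subst hDg
  have hg0 : g ≠ 0 := by rintro rfl; simp at hxy
  have hg : ∀ x, ¬g.IsRoot x := fun x hx => by simpa [hgroots] using (mem_roots hg0).mpr hx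
  have hgeven : Even g.natDegree := by
    by_contra hodd
    obtain ⟨x, hx⟩ := exists_isRoot_of_odd_natDegree (Nat.not_even_iff_odd.mp hodd)
    exact hg x hx
  rw [hD] at hcard
  obtain h4 | h2 | h0 : g.natDegree = 4 ∨ g.natDegree = 2 ∨ g.natDegree = 0 := by
    obtain ⟨k, hk⟩ := hgeven; omega
  · rw [h4, add_eq_right, Multiset.card_eq_zero] at hcard
    refine absurd hxy (eval_mul_eval_nonneg_of_eq_sq_mul (f := 1) ?_ hg x y).not_gt
    simp [hcard]
  · obtain ⟨r, s, rfl⟩ := Multiset.card_eq_two.mp (by omega : Multiset.card R = 2)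
    exact hasNormalizableRoots_of_two_real_roots (r := r) (s := s) (by simp) h2 hg hxy
  · obtain ⟨s₀, s₁, s₂, s₃, hs⟩ := List.length_eq_four.mp
      (by simp [Multiset.length_sort]; omega : (R.sort (· ≤ ·)).length = 4)
    have hsorted := Multiset.pairwise_sort R (· ≤ ·)
    have hR := Multiset.sort_eq R (· ≤ ·)
    simp only [hs, List.pairwise_cons, List.mem_cons, List.not_mem_nil] at hsorted hR
    subst hR
    rw [eq_C_of_natDegree_eq_zero h0] at hxy ⊢
    exact hasNormalizableRoots_of_four_real_roots (c := g.coeff 0) (by simp; ring)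
      (hsorted.1 s₁ (by simp)) (hsorted.2.1 s₂ (by simp)) (hsorted.2.2.1 s₃ (by simp)) hxy

-- `0 < c σ` makes the leading coefficient `c σ⁵` of the normalized quintic positive, which is
-- what allows a real rescaling of `y`.
theorem exists_normalization_of_eval_mul_eval_neg {D : ℝ[X]} (hD : D.natDegree = 4) {x y : ℝ}
    (hxy : D.eval x * D.eval y < 0) :
    ∃ (c σ r : ℝ) (lam mu : ℂ), 0 < c * σ ∧ NormalFormParams lam mu ∧
      (D.map (algebraMap ℝ ℂ)).comp (C (σ : ℂ) * X + C (r : ℂ)) =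
        C ((c : ℂ) * (σ : ℂ) ^ 4) * (X * (X - 1) * (X - C lam) * (X - C mu)) := by
  obtain ⟨c, r₀, r₁, z₂, z₃, hc, h01, hparams, hmap⟩ :=
    hasNormalizableRoots_of_eval_mul_eval_neg hD hxy
  have hnorm := comp_affine_eq_of_eq_C_mul (by exact_mod_cast h01) hmap
  rcases (mul_ne_zero hc (sub_ne_zero.mpr h01.symm)).lt_or_gt with hneg | hpos
  · refine ⟨c, -(r₁ - r₀), r₁, _, _, by linarith, hparams.reflect, ?_⟩
    have hreflect := comp_affine_reflect hnorm
    rw [sub_add_cancel] at hreflect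
    push_cast
    exact hreflect
  · refine ⟨c, r₁ - r₀, r₀, _, _, hpos, hparams, ?_⟩
    push_cast
    exact hnorm

noncomputable def quinticNormalForm (lam mu : ℂ) : ℂ[X] :=
  -(C (lam * mu / 2) * X ^ 2) + C ((lam + mu + lam * mu) / 3) * X ^ 3 -
    C ((1 + lam + mu) / 4) * X ^ 4 + C (1 / 5) * X ^ 5

theorem eval_quinticNormalForm (lam mu x : ℂ) :
    (quinticNormalForm lam mu).eval x = -(lam * mu / 2 * x ^ 2) +
      (lam + mu + lam * mu) / 3 * x ^ 3 - (1 + lam + mu) / 4 * x ^ 4 + 1 / 5 * x ^ 5 := by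
  simp [quinticNormalForm]

theorem derivative_quinticNormalForm (lam mu : ℂ) :
    derivative (quinticNormalForm lam mu) = X * (X - 1) * (X - C lam) * (X - C mu) := by
  simp only [quinticNormalForm, derivative_add, derivative_sub, derivative_neg,
    derivative_C_mul_X_pow]
  norm_num
  ring

theorem ofReal_eval_affine_eq_quinticNormalForm {P : ℝ[X]} {c σ r : ℝ} {lam mu : ℂ}
    (h : (P.derivative.map (algebraMap ℝ ℂ)).comp (C (σ : ℂ) * X + C (r : ℂ)) =
      C ((c : ℂ) * (σ : ℂ) ^ 4) * (X * (X - 1) * (X - C lam) * (X - C mu))) (x : ℝ) :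
    ((P.eval (σ * x + r) : ℝ) : ℂ) =
      c * σ ^ 5 * (quinticNormalForm lam mu).eval (x : ℂ) + P.eval r := by
  have hP := comp_affine_eq_of_derivative_comp_eq (p := P.map (algebraMap ℝ ℂ))
    (G := quinticNormalForm lam mu) (by rw [derivative_map, h, derivative_quinticNormalForm])
  have hx := congrArg (eval (x : ℂ)) hP
  simp only [eval_comp, eval_add, eval_mul, eval_C, eval_X] at hx
  rw [← ofReal_mul, ← ofReal_add, eval_map_ofReal, eval_map_ofReal,
    eval_quinticNormalForm lam mu 0] at hx
  linear_combination hx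

theorem exists_deriv_neg_and_deriv_pos {f : ℝ → ℝ} {α β γ : ℝ} (hγ : γ ∈ Set.Ioo α β)
    (hf : ContinuousOn f (Set.Icc α β)) (hf' : DifferentiableOn ℝ f (Set.Ioo α β))
    (hα : f γ < f α) (hβ : f γ < f β) : ∃ x y, deriv f x < 0 ∧ 0 < deriv f y := by
  obtain ⟨x, -, hfx⟩ := exists_deriv_eq_slope f hγ.1
    (hf.mono (Set.Icc_subset_Icc_right hγ.2.le)) (hf'.mono (Set.Ioo_subset_Ioo_right hγ.2.le))
  obtain ⟨y, -, hfy⟩ := exists_deriv_eq_slope f hγ.2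
    (hf.mono (Set.Icc_subset_Icc_left hγ.1.le)) (hf'.mono (Set.Ioo_subset_Ioo_left hγ.1.le))
  refine ⟨x, y, ?_, ?_⟩
  · rw [hfx]; exact div_neg_of_neg_of_pos (by linarith) (by linarith [hγ.1])
  · rw [hfy]; exact div_pos (by linarith) (by linarith [hγ.2])

/-- Any real Hamiltonian `H = y² + P(x)` with `deg P = 5` whose level sets
contain an oval (an oval of `{y² + P(x) = h}` is encoded by endpoints `α < β` with
`P(α) = P(β) = h`, `P < h` on `(α, β)` and `P' ≠ 0` at the endpoints) can be brought, by a
real affine change of `x`, a rescaling of `y`, an overall rescaling and adding a constant,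
to the normal form `(1/2)y² − (λμ/2)x² + ((λ+μ+λμ)/3)x³ − ((1+λ+μ)/4)x⁴ + (1/5)x⁵`,
where either `0 ≤ μ ≤ λ ≤ 1` are real, or `λ, μ` are complex conjugate. -/
theorem stmt8 (P : Polynomial ℝ) (hdeg : P.natDegree = 5)
    (hoval : ∃ h α β : ℝ, α < β ∧ P.eval α = h ∧ P.eval β = h ∧
      (∀ x ∈ Set.Ioo α β, P.eval x < h) ∧
      P.derivative.eval α ≠ 0 ∧ P.derivative.eval β ≠ 0) :
    ∃ lam mu : ℂ,
      ((lam.im = 0 ∧ mu.im = 0 ∧ 0 ≤ mu.re ∧ mu.re ≤ lam.re ∧ lam.re ≤ 1) ∨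
        (mu = (starRingEnd ℂ) lam ∧ lam.im ≠ 0)) ∧
      ∃ σ c ρ e k : ℝ, σ ≠ 0 ∧ ρ ≠ 0 ∧ e ≠ 0 ∧
        ∀ X Y : ℝ,
          ((e * ((ρ * Y) ^ 2 + P.eval (σ * X + c)) + k : ℝ) : ℂ) =
            (1 / 2) * (Y : ℂ) ^ 2 - (lam * mu / 2) * (X : ℂ) ^ 2 +
              ((lam + mu + lam * mu) / 3) * (X : ℂ) ^ 3 -
              ((1 + lam + mu) / 4) * (X : ℂ) ^ 4 + (1 / 5) * (X : ℂ) ^ 5 := by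
  obtain ⟨h, α, β, hαβ, hPα, hPβ, hPlt, -, -⟩ := hoval
  have hγ : (α + β) / 2 ∈ Set.Ioo α β := ⟨by linarith, by linarith⟩
  obtain ⟨x, y, hx, hy⟩ := exists_deriv_neg_and_deriv_pos hγ P.continuous.continuousOn
    P.differentiable.differentiableOn (by linarith [hPlt _ hγ]) (by linarith [hPlt _ hγ])
  rw [Polynomial.deriv] at hx hy
  obtain ⟨c, σ, r, lam, mu, hcσ, hparams, hnorm⟩ := exists_normalization_of_eval_mul_eval_neg
    (by rw [natDegree_derivative, hdeg]) (mul_neg_of_neg_of_pos hx hy)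
  have hσ : σ ≠ 0 := by rintro rfl; simp at hcσ
  have hlc : 0 < c * σ ^ 5 := by nlinarith [pow_pos (sq_pos_of_ne_zero hσ) 2]
  set e := (c * σ ^ 5)⁻¹
  have he : 0 < e := inv_pos.mpr hlc
  set ρ := Real.sqrt (1 / (2 * e))
  have heρ : e * ρ ^ 2 * 2 = 1 := by
    rw [Real.sq_sqrt (by positivity)]; field_simp
  have hec : (e : ℂ) * (c * σ ^ 5) = 1 := by exact_mod_cast inv_mul_cancel₀ hlc.ne'
  refine ⟨lam, mu, hparams, σ, r, ρ, e, -(e * P.eval r), hσ, by positivity, he.ne',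
    fun X Y => ?_⟩
  push_cast
  rw [ofReal_eval_affine_eq_quinticNormalForm hnorm, eval_quinticNormalForm]
  linear_combination (Y : ℂ) ^ 2 / 2 * (by exact_mod_cast heρ : (e : ℂ) * ρ ^ 2 * 2 = 1) +
    (-(lam * mu / 2) * X ^ 2 + (lam + mu + lam * mu) / 3 * X ^ 3 - (1 + lam + mu) / 4 * X ^ 4 +
      1 / 5 * X ^ 5) * hec
end

section
/- If 0 < μ < λ < 1, then the critical values of the normal form Hamiltonian satisfy h_0 > h_μ, h_λ > h_μ, and h_λ > h_1. -/
/-- If `0 < μ < λ < 1`, then the critical values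
`h₀ = 0`, `h₁ = −(1/60)(3 − 5λ − 5μ + 10λμ)`,
`h_λ = −(λ³/60)(3λ² − 5λμ − 5λ + 10μ)`, `h_μ = −(μ³/60)(3μ² − 5λμ − 5μ + 10λ)`
of the normal form Hamiltonian satisfy `h₀ > h_μ`, `h_λ > h_μ` and `h_λ > h₁`. -/
theorem stmt10 (lam mu : ℝ) (hmu : 0 < mu) (hml : mu < lam) (hlam : lam < 1)
    (h0 h1 hl hm : ℝ)
    (hh0 : h0 = 0)
    (hh1 : h1 = -(1 / 60) * (3 - 5 * lam - 5 * mu + 10 * lam * mu))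
    (hhl : hl = -(lam ^ 3 / 60) * (3 * lam ^ 2 - 5 * lam * mu - 5 * lam + 10 * mu))
    (hhm : hm = -(mu ^ 3 / 60) * (3 * mu ^ 2 - 5 * lam * mu - 5 * mu + 10 * lam)) :
    h0 > hm ∧ hl > hm ∧ hl > h1 := by
  subst hh0 hh1 hhl hhm
  have h1 : 0 < lam - mu := by linarith
  have h2 : 0 < 1 - lam := by linarith
  refine ⟨?_, ?_, ?_⟩
  · nlinarith [mul_pos hmu h1, mul_pos hmu hmu, sq_nonneg mu,
      mul_pos (mul_pos hmu hmu) hmu,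
      mul_pos (mul_pos (mul_pos hmu hmu) hmu) h1,
      mul_pos (mul_pos (mul_pos hmu hmu) hmu) (mul_pos hmu h2),
      mul_pos (mul_pos (mul_pos hmu hmu) hmu) (mul_pos hmu (by linarith : (0:ℝ) < 1 - mu))]
  · nlinarith [mul_pos h1 h1, mul_pos (mul_pos h1 h1) h1, mul_pos hmu h1, mul_pos hmu h2,
      mul_pos (mul_pos (mul_pos h1 h1) h1) (mul_pos hmu h2),
      mul_pos (mul_pos (mul_pos h1 h1) h1) (mul_pos hmu hmu),
      mul_pos (mul_pos (mul_pos h1 h1) h1) (mul_pos h1 h1),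
      sq_nonneg (lam + mu), sq_nonneg (lam*mu)]
  · nlinarith [mul_pos h2 h2, mul_pos (mul_pos h2 h2) h2, mul_pos hmu h2,
      mul_pos (mul_pos (mul_pos h2 h2) h2) (mul_pos hmu h1),
      mul_pos (mul_pos (mul_pos h2 h2) h2) (mul_pos hmu hmu),
      mul_pos (mul_pos (mul_pos h2 h2) h2) (mul_pos h2 h2),
      mul_pos (mul_pos (mul_pos h2 h2) h2) (mul_pos (lt_trans hmu hml) h1)]
end

section
/- For complex conjugate parameters λ = a + ib, μ = a − ib (b ≠ 0), the condition h_λ = h_μ for the normal form Hamiltonian is equivalent to the equation b^2 = 5a(a − 1); i.e., (Im λ)^2 = 5 Re λ (Re λ − 1) defines the locus where the two complex critical values coincide. -/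
open Complex

/-- For complex conjugate parameters `λ = a + ib`, `μ = a − ib` (`b ≠ 0`),
the condition `h_λ = h_μ` (i.e. `P(λ) = P(μ)` for the normal form
`P(x) = −(λμ/2)x² + ((λ+μ+λμ)/3)x³ − ((1+λ+μ)/4)x⁴ + (1/5)x⁵`) is equivalent to
`b² = 5a(a − 1)`, i.e. `(Im λ)² = 5 Re λ (Re λ − 1)`. -/
theorem stmt11 (a b : ℝ) (hb : b ≠ 0) (lam mu : ℂ) (P : ℂ → ℂ)
    (hlam : lam = Complex.mk a b) (hmu : mu = Complex.mk a (-b))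
    (hP : ∀ x, P x = -(lam * mu / 2) * x ^ 2 + ((lam + mu + lam * mu) / 3) * x ^ 3 -
      ((1 + lam + mu) / 4) * x ^ 4 + (1 / 5) * x ^ 5) :
    P lam = P mu ↔ b ^ 2 = 5 * a * (a - 1) := by
  subst hlam hmu
  rw [hP, hP, Complex.ext_iff]
  simp only [Complex.add_re, Complex.add_im, Complex.sub_re, Complex.sub_im,
    Complex.mul_re, Complex.mul_im, Complex.div_re, Complex.div_im, Complex.neg_re,
    Complex.neg_im, Complex.one_re, Complex.one_im, pow_succ, pow_zero, one_mul]
  norm_num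
  constructor
  · rintro ⟨h1, h2⟩
    have key : b^3 * (b^2 - 5*a*(a-1)) = 0 := by linear_combination (-15/4 : ℝ) * h2
    rcases mul_eq_zero.1 key with h | h
    · exact absurd (pow_eq_zero_iff (by norm_num)|>.1 h) hb
    · linarith
  · intro h
    constructor
    · ring
    · linear_combination (-(4:ℝ)/15*b^3) * h
end

section
/- Let P(x) be a real degree-5 polynomial with P' = x(x−μ)(x−λ)(x−1), and set R(x,y) = (1/5)y^4 − (1/6)y^2 P'''(x) + P'(x) (so that Im P(x+iy) = y·R(x,y)). At every nondegenerate real critical point (ξ, η) of R, the Hessian determinant R_xx R_yy − R_xy^2 is strictly negative; specifically it equals −(1/3)(P'''(ξ))^2 if η = 0 and P''(ξ) = 0, and equals −(5/108)P'''(ξ)(P''''(ξ))^2 − (4/9)(P'''(ξ))^2 if η^2 = (5/12)P'''(ξ). Hence every nondegenerate critical point of R is a saddle. -/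
/-! Along `y ↦ R(ξ, y)` the critical point equation reads `η (4/5 η² - 1/3 P'''(ξ)) = 0`, and the
Hessian of `R` only involves `P'''(ξ)`, `P''''(ξ)` and `P⁽⁵⁾ = 4! = 24` (as `P'` is a monic quartic):
`det = (P''' - 4η²)(12/5 η² - 1/3 P''') - 1/9 η² (P'''')²`.
On the branch `η = 0` this is `-1/3 (P''')²`; on the branch `η² = 5/12 P'''` it is
`-5/108 P''' (P'''')² - 4/9 (P''')²` with `P''' = 12/5 η² ≥ 0`. Both are `≤ 0`. -/

open Polynomial

theorem Polynomial.iterate_derivative_natDegree {R : Type*} [Semiring R] (p : R[X]) :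
    derivative^[p.natDegree] p = C ((p.natDegree.factorial : R) * p.leadingCoeff) := by
  ext m
  rw [coeff_iterate_derivative, coeff_C]
  rcases m with _ | m
  · simp [Nat.descFactorial_self, nsmul_eq_mul]
  · simp [coeff_eq_zero_of_natDegree_lt (show p.natDegree < m + 1 + p.natDegree by omega)]

theorem Polynomial.deriv_eq_eval_derivative {𝕜 : Type*} [NontriviallyNormedField 𝕜] (q : 𝕜[X]) :
    _root_.deriv (fun x => q.eval x) = fun x => q.derivative.eval x :=
  _root_.funext fun _ => q.deriv

section ImQuotient

variable {p1 p2 p3 p4 : ℝ → ℝ}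

theorem hasDerivAt_chain_of_monic_quartic {q : ℝ[X]} (hmon : q.Monic) (hdeg : q.natDegree = 4)
    (hp1 : p1 = fun x => q.eval x) (hp2 : p2 = deriv p1) (hp3 : p3 = deriv p2)
    (hp4 : p4 = deriv p3) :
    (∀ x, HasDerivAt p1 (p2 x) x) ∧ (∀ x, HasDerivAt p2 (p3 x) x) ∧
      (∀ x, HasDerivAt p3 (p4 x) x) ∧ ∀ x, HasDerivAt p4 24 x := by
  have hq4 : derivative (derivative (derivative (derivative q))) = C 24 := by
    have := q.iterate_derivative_natDegree
    rw [hdeg, hmon.leadingCoeff] at this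
    simpa [Function.iterate_succ_apply', Nat.factorial] using this
  subst hp1 hp2 hp3 hp4
  simp only [deriv_eq_eval_derivative]
  refine ⟨fun x => q.hasDerivAt x, fun x => q.derivative.hasDerivAt x,
    fun x => q.derivative.derivative.hasDerivAt x, fun x => ?_⟩
  simpa [hq4] using q.derivative.derivative.derivative.hasDerivAt x

noncomputable def imQuotient (p1 p3 : ℝ → ℝ) (x y : ℝ) : ℝ :=
  1 / 5 * y ^ 4 - 1 / 6 * y ^ 2 * p3 x + p1 x

noncomputable def hessianDet (f : ℝ → ℝ → ℝ) (ξ η : ℝ) : ℝ :=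
  deriv (deriv (fun x => f x η)) ξ * deriv (deriv (fun y => f ξ y)) η -
    (deriv (fun x => deriv (fun y => f x y) η) ξ) ^ 2

theorem hasDerivAt_imQuotient_snd (x y : ℝ) :
    HasDerivAt (fun y => imQuotient p1 p3 x y) (4 / 5 * y ^ 3 - 1 / 3 * p3 x * y) y :=
  ((((hasDerivAt_pow 4 y).const_mul (1 / 5)).sub
    (((hasDerivAt_pow 2 y).const_mul (1 / 6)).mul_const (p3 x))).add_const (p1 x)).congr_deriv
    (by norm_num; ring)

theorem deriv_imQuotient_snd (x : ℝ) :
    deriv (fun y => imQuotient p1 p3 x y) = fun y => 4 / 5 * y ^ 3 - 1 / 3 * p3 x * y :=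
  funext fun y => (hasDerivAt_imQuotient_snd x y).deriv

theorem deriv_deriv_imQuotient_snd (x y : ℝ) :
    deriv (deriv fun y => imQuotient p1 p3 x y) y = 12 / 5 * y ^ 2 - 1 / 3 * p3 x := by
  rw [deriv_imQuotient_snd]
  exact (((hasDerivAt_pow 3 y).const_mul (4 / 5)).sub
    ((hasDerivAt_id y).const_mul (1 / 3 * p3 x))).deriv.trans (by norm_num; ring)

theorem deriv_deriv_imQuotient_snd_fst (h3 : ∀ x, HasDerivAt p3 (p4 x) x) (x y : ℝ) :
    deriv (fun x => deriv (fun y => imQuotient p1 p3 x y) y) x = -(1 / 3) * y * p4 x := by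
  simp only [deriv_imQuotient_snd]
  exact ((((h3 x).const_mul (1 / 3)).mul_const y).const_sub (4 / 5 * y ^ 3)).deriv.trans (by ring)

theorem hasDerivAt_imQuotient_fst (h1 : ∀ x, HasDerivAt p1 (p2 x) x)
    (h3 : ∀ x, HasDerivAt p3 (p4 x) x) (x y : ℝ) :
    HasDerivAt (fun x => imQuotient p1 p3 x y) (p2 x - 1 / 6 * y ^ 2 * p4 x) x :=
  ((((h3 x).const_mul (1 / 6 * y ^ 2)).const_sub (1 / 5 * y ^ 4)).add (h1 x)).congr_deriv
    (by ring)

theorem deriv_deriv_imQuotient_fst {c : ℝ} (h1 : ∀ x, HasDerivAt p1 (p2 x) x)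
    (h2 : ∀ x, HasDerivAt p2 (p3 x) x) (h3 : ∀ x, HasDerivAt p3 (p4 x) x)
    (h4 : ∀ x, HasDerivAt p4 c x) (x y : ℝ) :
    deriv (deriv fun x => imQuotient p1 p3 x y) x = p3 x - 1 / 6 * y ^ 2 * c := by
  rw [funext fun x => (hasDerivAt_imQuotient_fst h1 h3 x y).deriv]
  exact ((h2 x).sub ((h4 x).const_mul _)).deriv

theorem hessianDet_imQuotient (h1 : ∀ x, HasDerivAt p1 (p2 x) x)
    (h2 : ∀ x, HasDerivAt p2 (p3 x) x) (h3 : ∀ x, HasDerivAt p3 (p4 x) x)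
    (h4 : ∀ x, HasDerivAt p4 24 x) (ξ η : ℝ) :
    hessianDet (imQuotient p1 p3) ξ η =
      (p3 ξ - 4 * η ^ 2) * (12 / 5 * η ^ 2 - 1 / 3 * p3 ξ) - 1 / 9 * η ^ 2 * p4 ξ ^ 2 := by
  rw [hessianDet, deriv_deriv_imQuotient_fst h1 h2 h3 h4, deriv_deriv_imQuotient_snd,
    deriv_deriv_imQuotient_snd_fst h3]
  ring

theorem hessianDet_imQuotient_nonpos (h1 : ∀ x, HasDerivAt p1 (p2 x) x)
    (h2 : ∀ x, HasDerivAt p2 (p3 x) x) (h3 : ∀ x, HasDerivAt p3 (p4 x) x)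
    (h4 : ∀ x, HasDerivAt p4 24 x) {ξ η : ℝ}
    (hcrit : deriv (fun y => imQuotient p1 p3 ξ y) η = 0) :
    hessianDet (imQuotient p1 p3) ξ η ≤ 0 := by
  rw [deriv_imQuotient_snd] at hcrit
  rw [hessianDet_imQuotient h1 h2 h3 h4]
  have hfac : η * (4 / 5 * η ^ 2 - 1 / 3 * p3 ξ) = 0 := by linear_combination hcrit
  rcases mul_eq_zero.1 hfac with rfl | hη
  · nlinarith [sq_nonneg (p3 ξ)]
  · rw [show p3 ξ = 12 / 5 * η ^ 2 by linarith]
    nlinarith [sq_nonneg (η ^ 2), mul_nonneg (sq_nonneg η) (sq_nonneg (p4 ξ))]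

end ImQuotient

theorem stmt12_general (lam mu : ℝ) (p1 p2 p3 p4 : ℝ → ℝ)
    (hp1 : ∀ x, p1 x = x * (x - mu) * (x - lam) * (x - 1))
    (hp2 : p2 = deriv p1) (hp3 : p3 = deriv p2) (hp4 : p4 = deriv p3)
    (R : ℝ → ℝ → ℝ)
    (hR : ∀ x y, R x y = (1 / 5) * y ^ 4 - (1 / 6) * y ^ 2 * p3 x + p1 x)
    (ξ η : ℝ)
    (hcy : deriv (fun y => R ξ y) η = 0)
    (Hess : ℝ)
    (hHess : Hess = deriv (deriv (fun x => R x η)) ξ * deriv (deriv (fun y => R ξ y)) η -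
      (deriv (fun x => deriv (fun y => R x y) η) ξ) ^ 2) :
    ((η = 0 ∧ p2 ξ = 0) → Hess = -(1 / 3) * (p3 ξ) ^ 2) ∧
    ((η ^ 2 = (5 / 12) * p3 ξ ∧ p2 ξ - (5 / 72) * p3 ξ * p4 ξ = 0) →
      Hess = -(5 / 108) * p3 ξ * (p4 ξ) ^ 2 - (4 / 9) * (p3 ξ) ^ 2) ∧
    (Hess ≠ 0 → Hess < 0) := by
  obtain ⟨h1, h2, h3, h4⟩ := hasDerivAt_chain_of_monic_quartic
    (q := X * (X - C mu) * (X - C lam) * (X - C 1)) (by monicity!) (by compute_degree!)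
    (funext fun x => by simp [hp1]) hp2 hp3 hp4
  obtain rfl : R = imQuotient p1 p3 := funext₂ hR
  have hH := hHess.trans (hessianDet_imQuotient h1 h2 h3 h4 ξ η)
  refine ⟨?_, ?_, fun hne =>
    (hHess.trans_le (hessianDet_imQuotient_nonpos h1 h2 h3 h4 hcy)).lt_of_ne hne⟩
  · rintro ⟨rfl, -⟩
    rw [hH]
    ring
  · rintro ⟨hη, -⟩
    rw [hH]
    linear_combination (-(48 / 5) * η ^ 2 - 4 / 15 * p3 ξ - 1 / 9 * p4 ξ ^ 2) * hη

/-- Let `P` be a real degree-5 polynomial with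
`P' (x) = x(x−μ)(x−λ)(x−1)` and set `R(x,y) = (1/5)y⁴ − (1/6)y²P'''(x) + P'(x)`
(so that `Im P(x+iy) = y·R(x,y)`).  At every nondegenerate real critical point `(ξ,η)` of
`R` the Hessian determinant `R_xx R_yy − R_xy²` is strictly negative; it equals
`−(1/3)(P'''(ξ))²` when `η = 0, P''(ξ) = 0`, and
`−(5/108)P'''(ξ)(P''''(ξ))² − (4/9)(P'''(ξ))²` when `η² = (5/12)P'''(ξ)` and
`P''(ξ) − (5/72)P'''(ξ)P''''(ξ) = 0`. -/
theorem stmt12 (lam mu : ℝ) (p1 p2 p3 p4 : ℝ → ℝ)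
    (hp1 : ∀ x, p1 x = x * (x - mu) * (x - lam) * (x - 1))
    (hp2 : p2 = deriv p1) (hp3 : p3 = deriv p2) (hp4 : p4 = deriv p3)
    (R : ℝ → ℝ → ℝ)
    (hR : ∀ x y, R x y = (1 / 5) * y ^ 4 - (1 / 6) * y ^ 2 * p3 x + p1 x)
    (ξ η : ℝ)
    (hcx : deriv (fun x => R x η) ξ = 0) (hcy : deriv (fun y => R ξ y) η = 0)
    (Hess : ℝ)
    (hHess : Hess = deriv (deriv (fun x => R x η)) ξ * deriv (deriv (fun y => R ξ y)) η -
      (deriv (fun x => deriv (fun y => R x y) η) ξ) ^ 2) :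
    ((η = 0 ∧ p2 ξ = 0) → Hess = -(1 / 3) * (p3 ξ) ^ 2) ∧
    ((η ^ 2 = (5 / 12) * p3 ξ ∧ p2 ξ - (5 / 72) * p3 ξ * p4 ξ = 0) →
      Hess = -(5 / 108) * p3 ξ * (p4 ξ) ^ 2 - (4 / 9) * (p3 ξ) ^ 2) ∧
    (Hess ≠ 0 → Hess < 0) :=
  stmt12_general lam mu p1 p2 p3 p4 hp1 hp2 hp3 hp4 R hR ξ η hcy Hess hHess
end

section
/- For 0 < μ < λ < 1, the quartic plane curve R(x,y) = 0, where R(x,y) = (1/5)y^4 − (1/6)y^2 P'''(x) + P'(x) and P' = x(x−μ)(x−λ)(x−1), contains no critical points of R; equivalently, R does not vanish at any solution of R_x = R_y = 0. -/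
/-!
By Rolle's theorem `P'' = 4 (x - a) (x - b) (x - c)` with `0 < a < μ < b < λ < c < 1`.
Since `R_y = y (4/5 y² - 1/3 P''')`, a critical point off the axis has `y² = 5/12 P'''(x) > 0`,
and then `R_x = 0` reads `72 P'' = 5 P''' P''''`. In the coordinate centred at the mean of
`a, b, c` this is a relation for a depressed cubic `4 t³ - 2 A t + B` which, together with
`P''' > 0`, forces `27 B² > 8 A³`, against the discriminant identity
`8 A³ - 27 B² = 16 ((a - b) (b - c) (c - a))²`. So critical points lie on the axis, where
`R = P'` and `R_x = P''`, and `P'` has simple roots.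
-/

open Set

theorem cubic_eq_of_roots {f : ℝ → ℝ} {u v w a b c : ℝ}
    (hf : ∀ x, f x = 4 * x ^ 3 + u * x ^ 2 + v * x + w)
    (hab : a ≠ b) (hbc : b ≠ c) (hac : a ≠ c) (ha : f a = 0) (hb : f b = 0) (hc : f c = 0) :
    f = fun x => 4 * (x - a) * (x - b) * (x - c) := by
  rw [hf] at ha hb hc
  have hab' : 4 * (a ^ 2 + a * b + b ^ 2) + u * (a + b) + v = 0 :=
    mul_left_cancel₀ (sub_ne_zero.2 hab) (by linear_combination ha - hb)
  have hbc' : 4 * (b ^ 2 + b * c + c ^ 2) + u * (b + c) + v = 0 :=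
    mul_left_cancel₀ (sub_ne_zero.2 hbc) (by linear_combination hb - hc)
  have hu : u = -4 * (a + b + c) :=
    mul_left_cancel₀ (sub_ne_zero.2 hac) (by linear_combination hab' - hbc')
  subst hu
  have hv : v = 4 * (a * b + b * c + c * a) := by linear_combination hab'
  subst hv
  funext x
  linear_combination hf x + ha

theorem hasDerivAt_quartic (r₁ r₂ r₃ r₄ x : ℝ) :
    HasDerivAt (fun x => (x - r₁) * (x - r₂) * (x - r₃) * (x - r₄))
      (4 * x ^ 3 - 3 * (r₁ + r₂ + r₃ + r₄) * x ^ 2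
        + 2 * (r₁ * r₂ + r₁ * r₃ + r₁ * r₄ + r₂ * r₃ + r₂ * r₄ + r₃ * r₄) * x
        - (r₁ * r₂ * r₃ + r₁ * r₂ * r₄ + r₁ * r₃ * r₄ + r₂ * r₃ * r₄)) x := by
  have hX (r : ℝ) : HasDerivAt (fun x : ℝ => x - r) 1 x := (hasDerivAt_id x).sub_const r
  exact ((((hX r₁).mul (hX r₂)).mul (hX r₃)).mul (hX r₄)).congr_deriv
    (by simp only [Pi.mul_apply]; ring)

theorem exists_deriv_quartic_eq_cubic {r₁ r₂ r₃ r₄ : ℝ}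
    (h₁₂ : r₁ < r₂) (h₂₃ : r₂ < r₃) (h₃₄ : r₃ < r₄) :
    ∃ a ∈ Ioo r₁ r₂, ∃ b ∈ Ioo r₂ r₃, ∃ c ∈ Ioo r₃ r₄,
      deriv (fun x => (x - r₁) * (x - r₂) * (x - r₃) * (x - r₄))
        = fun x => 4 * (x - a) * (x - b) * (x - c) := by
  set q := fun x : ℝ => (x - r₁) * (x - r₂) * (x - r₃) * (x - r₄)
  have hq (x : ℝ) := (hasDerivAt_quartic r₁ r₂ r₃ r₄ x).deriv
  have rolle {s t : ℝ} (hst : s < t) (hs : q s = 0) (ht : q t = 0) :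
      ∃ x ∈ Ioo s t, deriv q x = 0 :=
    exists_deriv_eq_zero hst (by fun_prop) (hs.trans ht.symm)
  obtain ⟨a, ha, ha0⟩ := rolle h₁₂ (by simp [q]) (by simp [q])
  obtain ⟨b, hb, hb0⟩ := rolle h₂₃ (by simp [q]) (by simp [q])
  obtain ⟨c, hc, hc0⟩ := rolle h₃₄ (by simp [q]) (by simp [q])
  refine ⟨a, ha, b, hb, c, hc, cubic_eq_of_roots (u := -3 * (r₁ + r₂ + r₃ + r₄))
    (v := 2 * (r₁ * r₂ + r₁ * r₃ + r₁ * r₄ + r₂ * r₃ + r₂ * r₄ + r₃ * r₄))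
    (w := -(r₁ * r₂ * r₃ + r₁ * r₂ * r₄ + r₁ * r₃ * r₄ + r₂ * r₃ * r₄)) (fun x => by rw [hq]; ring)
    (ha.2.trans hb.1).ne (hb.2.trans hc.1).ne (ha.2.trans (h₂₃.trans hc.1)).ne ha0 hb0 hc0⟩

theorem cubic_ne_zero_of_quartic_eq_zero {r₁ r₂ r₃ r₄ a b c x : ℝ} (ha : a ∈ Ioo r₁ r₂)
    (hb : b ∈ Ioo r₂ r₃) (hc : c ∈ Ioo r₃ r₄)
    (hx : (x - r₁) * (x - r₂) * (x - r₃) * (x - r₄) = 0) :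
    4 * (x - a) * (x - b) * (x - c) ≠ 0 := by
  simp only [mul_eq_zero, sub_eq_zero] at hx
  simp only [ne_eq, mul_eq_zero, sub_eq_zero, OfNat.ofNat_ne_zero, false_or, not_or]
  rcases hx with ((rfl | rfl) | rfl) | rfl <;> refine ⟨⟨?_, ?_⟩, ?_⟩ <;> intro h <;>
    linarith [ha.1, ha.2, hb.1, hb.2, hc.1, hc.2]

theorem hasDerivAt_cubic (a b c x : ℝ) :
    HasDerivAt (fun x => 4 * (x - a) * (x - b) * (x - c))
      (4 * ((x - b) * (x - c) + (x - a) * (x - c) + (x - a) * (x - b))) x := by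
  have hX (r : ℝ) : HasDerivAt (fun x : ℝ => x - r) 1 x := (hasDerivAt_id x).sub_const r
  exact ((((hX a).const_mul 4).mul (hX b)).mul (hX c)).congr_deriv
    (by simp only [Pi.mul_apply]; ring)

theorem hasDerivAt_cubic_deriv (a b c x : ℝ) :
    HasDerivAt (fun x => 4 * ((x - b) * (x - c) + (x - a) * (x - c) + (x - a) * (x - b)))
      (8 * (3 * x - a - b - c)) x := by
  have hX (r : ℝ) : HasDerivAt (fun x : ℝ => x - r) 1 x := (hasDerivAt_id x).sub_const r
  exact ((((hX b).mul (hX c)).add ((hX a).mul (hX c))).add ((hX a).mul (hX b))).const_mul 4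
    |>.congr_deriv (by ring)

-- `27 B² ≤ 8 A³` says that `f t = 4 t³ - 2 A t + B` has only real roots, and `h` is
-- `72 f = 5 f' f''`.
theorem le_of_depressed_cubic {A B t : ℝ} (hdisc : 27 * B ^ 2 ≤ 8 * A ^ 3)
    (h : 48 * t ^ 3 - 4 * A * t - 3 * B = 0) : 12 * t ^ 2 ≤ 2 * A := by
  have hA : 0 ≤ A := by
    have : 0 ≤ A ^ 3 := by nlinarith [sq_nonneg B]
    exact (Odd.pow_nonneg_iff (by decide)).1 this
  by_contra! hlt
  obtain ⟨u, rfl⟩ : ∃ u, A = 12 * t ^ 2 - u := ⟨12 * t ^ 2 - A, by ring⟩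
  have hAu : 12 * t ^ 2 - u < u := by linarith
  have h3B : 3 * B = 4 * t * u := by linear_combination -h
  have hB : 27 * B ^ 2 = 4 * (12 * t ^ 2) * u ^ 2 := by
    linear_combination 3 * (3 * B + 4 * t * u) * h3B
  nlinarith [mul_lt_mul_of_pos_left (mul_self_lt_mul_self hA hAu) (by linarith : 0 < 12 * t ^ 2),
    mul_le_mul_of_nonneg_right (by linarith : 2 * (12 * t ^ 2 - u) ≤ 12 * t ^ 2)
      (mul_nonneg hA hA)]

theorem cubic_deriv_nonpos_of_eq (a b c x : ℝ)
    (h : 72 * (4 * (x - a) * (x - b) * (x - c))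
      = 5 * (4 * ((x - b) * (x - c) + (x - a) * (x - c) + (x - a) * (x - b)))
        * (8 * (3 * x - a - b - c))) :
    4 * ((x - b) * (x - c) + (x - a) * (x - c) + (x - a) * (x - b)) ≤ 0 := by
  set m := (a + b + c) / 3
  have hdisc : 8 * ((a - m) ^ 2 + (b - m) ^ 2 + (c - m) ^ 2) ^ 3
      - 27 * (-4 * (a - m) * (b - m) * (c - m)) ^ 2 = 16 * ((a - b) * (b - c) * (c - a)) ^ 2 := by
    ring
  have := le_of_depressed_cubic (t := x - m) (A := (a - m) ^ 2 + (b - m) ^ 2 + (c - m) ^ 2)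
    (B := -4 * (a - m) * (b - m) * (c - m)) (by nlinarith [hdisc, sq_nonneg ((a - b) * (b - c) * (c - a))])
    (by linear_combination (-1/24) * h)
  linear_combination this

theorem hasDerivAt_curve_fst {p1 p3 : ℝ → ℝ} {d1 d3 x : ℝ} (y : ℝ)
    (h1 : HasDerivAt p1 d1 x) (h3 : HasDerivAt p3 d3 x) :
    HasDerivAt (fun x' => 1 / 5 * y ^ 4 - 1 / 6 * y ^ 2 * p3 x' + p1 x')
      (d1 - 1 / 6 * y ^ 2 * d3) x :=
  (((hasDerivAt_const x _).sub (h3.const_mul _)).add h1).congr_deriv (by ring)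

theorem hasDerivAt_curve_snd (p1 p3 : ℝ → ℝ) (x y : ℝ) :
    HasDerivAt (fun y' => 1 / 5 * y' ^ 4 - 1 / 6 * y' ^ 2 * p3 x + p1 x)
      (4 / 5 * y ^ 3 - 1 / 3 * y * p3 x) y :=
  ((((hasDerivAt_pow 4 y).const_mul _).sub
    (((hasDerivAt_pow 2 y).const_mul _).mul_const _)).add_const _).congr_deriv (by push_cast; ring)

theorem eq_zero_of_curve_critical {a b c x y : ℝ}
    (hx : 4 * (x - a) * (x - b) * (x - c) - 1 / 6 * y ^ 2 * (8 * (3 * x - a - b - c)) = 0)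
    (hy : 4 / 5 * y ^ 3
      - 1 / 3 * y * (4 * ((x - b) * (x - c) + (x - a) * (x - c) + (x - a) * (x - b))) = 0) :
    y = 0 := by
  by_contra hy0
  have hy2 : y ^ 2 = 5 / 12 * (4 * ((x - b) * (x - c) + (x - a) * (x - c) + (x - a) * (x - b))) :=
    mul_left_cancel₀ hy0 (by linear_combination 5 / 4 * hy)
  have := cubic_deriv_nonpos_of_eq a b c x
    (by linear_combination 72 * hx + 96 * (3 * x - a - b - c) * hy2)
  linarith [sq_pos_of_ne_zero hy0]

/-- For `0 < μ < λ < 1`, the quartic curve `R(x,y) = 0`, where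
`R(x,y) = (1/5)y⁴ − (1/6)y²P'''(x) + P'(x)` and `P'(x) = x(x−μ)(x−λ)(x−1)`, contains no
critical point of `R`: `R` does not vanish at any solution of `R_x = R_y = 0`. -/
theorem stmt13 (lam mu : ℝ) (hmu : 0 < mu) (hml : mu < lam) (hlam : lam < 1)
    (p1 p2 p3 : ℝ → ℝ)
    (hp1 : ∀ x, p1 x = x * (x - mu) * (x - lam) * (x - 1))
    (hp2 : p2 = deriv p1) (hp3 : p3 = deriv p2)
    (R : ℝ → ℝ → ℝ)
    (hR : ∀ x y, R x y = (1 / 5) * y ^ 4 - (1 / 6) * y ^ 2 * p3 x + p1 x) :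
    ∀ x y : ℝ, deriv (fun x' => R x' y) x = 0 → deriv (fun y' => R x y') y = 0 →
      R x y ≠ 0 := by
  intro x y hRx hRy hR0
  obtain ⟨a, ha, b, hb, c, hc, hderiv⟩ := exists_deriv_quartic_eq_cubic hmu hml hlam
  have hp1' : p1 = fun x => (x - 0) * (x - mu) * (x - lam) * (x - 1) :=
    funext fun x => by rw [hp1, sub_zero]
  have hp2' : p2 = fun x => 4 * (x - a) * (x - b) * (x - c) := by rw [hp2, hp1', hderiv]
  have hp3' : p3 = fun x => 4 * ((x - b) * (x - c) + (x - a) * (x - c) + (x - a) * (x - b)) :=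
    funext fun x => by rw [hp3, hp2', (hasDerivAt_cubic a b c x).deriv]
  have hp1d : HasDerivAt p1 (p2 x) x := by
    rw [hp2]; exact (by rw [hp1']; fun_prop : Differentiable ℝ p1).differentiableAt.hasDerivAt
  have hp3d : HasDerivAt p3 (8 * (3 * x - a - b - c)) x := hp3' ▸ hasDerivAt_cubic_deriv a b c x
  rw [funext (hR · y), (hasDerivAt_curve_fst y hp1d hp3d).deriv, hp2'] at hRx
  rw [funext (hR x), (hasDerivAt_curve_snd p1 p3 x y).deriv, hp3'] at hRy
  obtain rfl := eq_zero_of_curve_critical hRx hRy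
  refine cubic_ne_zero_of_quartic_eq_zero ha hb hc ?_ (by simpa using hRx)
  simpa [hR, hp1'] using hR0
end

section
/- Let λ = a + ib with a ≤ 1/2, and write the quartic R in t = x − 1 as R = t^4 + (3−2a)t^3 + (3−4a+a^2+b^2−2y^2)t^2 + (1−2a+a^2+b^2+(2a−3)y^2)t + R(1,y). Then for every fixed y, the polynomial in t cannot have three positive real roots, because the conditions required by Descartes' rule of signs (coefficient of t^2 negative and coefficient of t positive) are contradictory when a ≤ 1/2. -/
open Polynomial

private lemma stmt14_aux (a : ℝ) (ha : a ≤ 1 / 2) (A B CC : ℝ)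
    (key : ¬(A < 0 ∧ 0 < B))
    (q : Polynomial ℝ)
    (hq : q = X ^ 4 + C (3 - 2 * a) * X ^ 3 + C A * X ^ 2 + C B * X + C CC) :
    (q.roots.filter (fun t => 0 < t)).card ≤ 2 := by
  by_contra hcard
  push_neg at hcard
  set s := q.roots.filter (fun t => 0 < t) with hs
  obtain ⟨r1, hr1⟩ := (Multiset.card_pos_iff_exists_mem (s := s)).mp (by omega)
  obtain ⟨s1, hs1⟩ := Multiset.exists_cons_of_mem hr1
  have hc1 : 2 ≤ s1.card := by
    have := congrArg Multiset.card hs1; simp at this; omega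
  obtain ⟨r2, hr2⟩ := (Multiset.card_pos_iff_exists_mem (s := s1)).mp (by omega)
  obtain ⟨s2, hs2⟩ := Multiset.exists_cons_of_mem hr2
  have hc2 : 1 ≤ s2.card := by
    have := congrArg Multiset.card hs2; simp at this; omega
  obtain ⟨r3, hr3⟩ := (Multiset.card_pos_iff_exists_mem (s := s2)).mp (by omega)
  -- positivity
  have hpos : ∀ r ∈ s, (0:ℝ) < r := fun r hr => (Multiset.mem_filter.mp hr).2
  have h1 : (0:ℝ) < r1 := hpos r1 hr1
  have h2 : (0:ℝ) < r2 := hpos r2 (by rw [hs1]; exact Multiset.mem_cons_of_mem hr2)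
  have h3 : (0:ℝ) < r3 := hpos r3 (by
    rw [hs1]; exact Multiset.mem_cons_of_mem (by rw [hs2]; exact Multiset.mem_cons_of_mem hr3))
  -- the multiset {r1,r2,r3} ≤ roots
  have hle : ({r1, r2, r3} : Multiset ℝ) ≤ q.roots := by
    refine le_trans ?_ (Multiset.filter_le (fun t => 0 < t) q.roots)
    rw [← hs, hs1, hs2]
    obtain ⟨s3, hs3⟩ := Multiset.exists_cons_of_mem hr3
    rw [hs3]
    show r1 ::ₘ r2 ::ₘ r3 ::ₘ 0 ≤ r1 ::ₘ r2 ::ₘ r3 ::ₘ s3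
    exact Multiset.cons_le_cons _ (Multiset.cons_le_cons _ (Multiset.cons_le_cons _ (Multiset.zero_le _)))
  have hdvd : (X - C r1) * ((X - C r2) * ((X - C r3) * 1)) ∣ q := by
    have := (Multiset.prod_dvd_prod_of_le (Multiset.map_le_map (f := fun r => X - C r) hle)).trans
      q.prod_multiset_X_sub_C_dvd
    simpa using this
  obtain ⟨g, hg⟩ := hdvd
  have hP : (X - C r1) * ((X - C r2) * ((X - C r3) * 1)) = (X - C r1) * (X - C r2) * (X - C r3) := by ring
  rw [hP] at hg
  have hqm : q.Monic := by
    rw [hq]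
    monicity!
  have hPm : ((X - C r1) * (X - C r2) * (X - C r3)).Monic :=
    ((monic_X_sub_C r1).mul (monic_X_sub_C r2)).mul (monic_X_sub_C r3)
  have hgm : g.Monic := hPm.of_mul_monic_left (hg ▸ hqm)
  have hqdeg : q.natDegree = 4 := by rw [hq]; compute_degree!
  have hPdeg : ((X - C r1) * (X - C r2) * (X - C r3)).natDegree = 3 := by compute_degree!
  have hgdeg : g.natDegree = 1 := by
    have := Polynomial.natDegree_mul hPm.ne_zero hgm.ne_zero
    rw [← hg, hqdeg, hPdeg] at this; omega
  have hgX : g = X + C (g.coeff 0) := hgm.eq_X_add_C hgdeg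
  set c := g.coeff 0 with hc
  rw [hgX] at hg
  have hexp : q = X^4 + C (c - (r1+r2+r3)) * X^3
      + C (r1*r2+r1*r3+r2*r3 - c*(r1+r2+r3)) * X^2
      + C (c*(r1*r2+r1*r3+r2*r3) - r1*r2*r3) * X + C (-(c*(r1*r2*r3))) := by
    rw [hg]; simp only [map_add, map_sub, map_mul, map_neg]; ring
  have heq := hq.symm.trans hexp
  have e3 := congrArg (fun p => Polynomial.coeff p 3) heq
  have e2 := congrArg (fun p => Polynomial.coeff p 2) heq
  have e1 := congrArg (fun p => Polynomial.coeff p 1) heq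
  simp only [coeff_add, coeff_C_mul, coeff_X_pow, coeff_X, coeff_C] at e3 e2 e1
  norm_num at e3 e2 e1
  refine key ⟨?_, ?_⟩
  · nlinarith [e2, e3, mul_pos h1 h2, mul_pos h1 h3, mul_pos h2 h3, sq_nonneg (r1-r2),
      sq_nonneg (r1-r3), sq_nonneg (r2-r3), mul_pos (mul_pos h1 h2) h3,
      mul_pos (add_pos (add_pos h1 h2) h3) (add_pos (add_pos h1 h2) h3)]
  · nlinarith [e1, e3, mul_pos h1 h2, mul_pos h1 h3, mul_pos h2 h3,
      mul_pos (mul_pos h1 h2) h3, mul_nonneg h1.le (sq_nonneg (r2-r3)),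
      mul_nonneg h2.le (sq_nonneg (r1-r3)), mul_nonneg h3.le (sq_nonneg (r1-r2))]

/-- For `λ = a + ib`, `μ = a − ib`, write the quartic
`R(x,y) = (1/5)y⁴ − (1/6)y²P'''(x) + P'(x)` (with `P'(x) = x(x−1)((x−a)²+b²)`) in the
variable `t = x − 1`:
`R = t⁴ + (3−2a)t³ + (3−4a+a²+b²−2y²)t² + (1−2a+a²+b²+(2a−3)y²)t + R(1,y)`.
If `a ≤ 1/2` then, for every fixed `y`, this polynomial in `t` cannot have three positive
real roots (counted with multiplicity): the conditions required by Descartes' rule of signs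
(coefficient of `t²` negative and coefficient of `t` positive) are contradictory. -/
theorem stmt14 (a b y : ℝ) (ha : a ≤ 1 / 2)
    (p1 p3 : ℝ → ℝ)
    (hp1 : ∀ x, p1 x = x * (x - 1) * ((x - a) ^ 2 + b ^ 2))
    (hp3 : p3 = deriv (deriv p1))
    (R : ℝ → ℝ → ℝ)
    (hR : ∀ x y', R x y' = (1 / 5) * y' ^ 4 - (1 / 6) * y' ^ 2 * p3 x + p1 x)
    (q : Polynomial ℝ)
    (hq : q = X ^ 4 + C (3 - 2 * a) * X ^ 3 + C (3 - 4 * a + a ^ 2 + b ^ 2 - 2 * y ^ 2) * X ^ 2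
      + C (1 - 2 * a + a ^ 2 + b ^ 2 + (2 * a - 3) * y ^ 2) * X + C (R 1 y)) :
    (∀ t : ℝ, q.eval t = R (1 + t) y) ∧
    ¬(3 - 4 * a + a ^ 2 + b ^ 2 - 2 * y ^ 2 < 0 ∧
        0 < 1 - 2 * a + a ^ 2 + b ^ 2 + (2 * a - 3) * y ^ 2) ∧
    (q.roots.filter (fun t => 0 < t)).card ≤ 2 := by
  -- second derivative of p1
  have e1 : p1 = fun x => x^4 - (2*a+1)*x^3 + (a^2+b^2+2*a)*x^2 - (a^2+b^2)*x := by
    funext x; rw [hp1]; ring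
  have hd1 : deriv p1 = fun x => 4*x^3 - 3*(2*a+1)*x^2 + 2*(a^2+b^2+2*a)*x - (a^2+b^2) := by
    funext x
    rw [e1]
    have h : HasDerivAt (fun x : ℝ => x^4 - (2*a+1)*x^3 + (a^2+b^2+2*a)*x^2 - (a^2+b^2)*x)
        (4*x^3 - 3*(2*a+1)*x^2 + 2*(a^2+b^2+2*a)*x - (a^2+b^2)) x := by
      have := (((hasDerivAt_pow 4 x).sub ((hasDerivAt_pow 3 x).const_mul (2*a+1))).add
        ((hasDerivAt_pow 2 x).const_mul (a^2+b^2+2*a))).sub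
        ((hasDerivAt_id x).const_mul (a^2+b^2))
      refine this.congr_deriv ?_
      push_cast; ring
    exact h.deriv
  have hp3' : ∀ x, p3 x = 12*x^2 - 6*(2*a+1)*x + 2*(a^2+b^2+2*a) := by
    intro x
    rw [hp3, hd1]
    have h : HasDerivAt (fun x : ℝ => 4*x^3 - 3*(2*a+1)*x^2 + 2*(a^2+b^2+2*a)*x - (a^2+b^2))
        (12*x^2 - 6*(2*a+1)*x + 2*(a^2+b^2+2*a)) x := by
      have := ((((hasDerivAt_pow 3 x).const_mul 4).sub
        ((hasDerivAt_pow 2 x).const_mul (3*(2*a+1)))).add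
        ((hasDerivAt_id x).const_mul (2*(a^2+b^2+2*a)))).sub (hasDerivAt_const x (a^2+b^2))
      refine this.congr_deriv ?_
      push_cast; ring
    exact h.deriv
  have key : ¬(3 - 4 * a + a ^ 2 + b ^ 2 - 2 * y ^ 2 < 0 ∧
      0 < 1 - 2 * a + a ^ 2 + b ^ 2 + (2 * a - 3) * y ^ 2) := by
    rintro ⟨h1, h2⟩
    nlinarith [sq_nonneg y, sq_nonneg b, sq_nonneg (a-1), sq_nonneg (1-2*a),
      mul_nonneg (sq_nonneg b) (by linarith : (0:ℝ) ≤ 1 - 2*a), sq_nonneg (y^2 - 1)]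
  refine ⟨?_, key, stmt14_aux a ha _ _ _ key q hq⟩
  intro t
  rw [hq]
  simp only [eval_add, eval_mul, eval_pow, eval_C, eval_X]
  rw [hR, hR, hp1, hp1, hp3' 1, hp3' (1 + t)]
  ring
end
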